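/- arXiv:2001.07468 — 3 statements merged into one kernel-verified Lean document; each statement's English description precedes it below -/
import Mathlib

section
/- Let v = (v_i)_{i≥0} be the sequence with values in ℤ/4ℤ where v_i is the coefficient of x^i in 2x + 2x² + (2 + 3x)·S_∞(x) + 2x·S^e_∞(x) + (x + x²)·φ(x) reduced modulo 4. Then the 2-kernel of v is finite, i.e., v is 2-automatic. (This is the automaticity part of Theorem 1.2: Stiel_r modulo 4 is 2-automatic.) -/
open PowerSeries Classical

/-- The generating function of the Catalan numbers. -/
noncomputable def phi : PowerSeries ℤ := PowerSeries.mk fun n => (catalan n : ℤ)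

/-- `S_∞(x) = Σ_{i ≥ 0} x^{2^i}`. -/
noncomputable def Sinf : PowerSeries ℤ :=
  PowerSeries.mk fun n => if ∃ k : ℕ, n = 2 ^ k then 1 else 0

/-- `S^e_∞(x) = Σ_{i ≥ 0} x^{2^{2i}}`. -/
noncomputable def Seinf : PowerSeries ℤ :=
  PowerSeries.mk fun n => if ∃ k : ℕ, n = 2 ^ (2 * k) then 1 else 0

/-- The `k`-kernel of a sequence `u`. -/
def kKernel {α : Type*} (k : ℕ) (u : ℕ → α) : Set (ℕ → α) :=
  {g | ∃ e j : ℕ, j < k ^ e ∧ g = fun n => u (k ^ e * n + j)}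

/-- The coefficients, reduced modulo 4, of
`2x + 2x² + (2 + 3x)·S_∞(x) + 2x·S^e_∞(x) + (x + x²)·φ(x)`. -/
noncomputable def v (i : ℕ) : ZMod 4 :=
  ((PowerSeries.coeff i
      (2 * PowerSeries.X + 2 * PowerSeries.X ^ 2 +
        (2 + 3 * PowerSeries.X) * Sinf + 2 * PowerSeries.X * Seinf +
        (PowerSeries.X + PowerSeries.X ^ 2) * phi) : ℤ) : ZMod 4)

/-!
Modulo 4, `C_n ≡ 1` when `n + 1` is a power of two, `C_n ≡ 2` when `n + 1` is a sum of two
distinct powers of two, and `C_n ≡ 0` otherwise: in the convolution recurrence the cross terms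
cancel by the symmetry `(i, j) ↦ (j, i)`, and the remaining term counts the ways of writing `n + 2`
as `2 ^ k + 2 ^ l`. Hence `v` is a `ℤ/4`-linear combination of indicators of a finite family of
sets (powers of two, sums of two distinct powers of two, even and odd powers of two, some of their
translates by one, and a few singletons) which is closed under preimages by `n ↦ 2n` and
`n ↦ 2n + 1`. The 2-kernel of `v` therefore lies in the span of finitely many sequences over a
finite ring.
-/

namespace Nat

theorem bitIndices_two_pow_add_two_pow_of_lt {a b : ℕ} (hab : a < b) :
    (2 ^ a + 2 ^ b).bitIndices = [a, b] := by
  simpa using bitIndices_sum_map_two_pow (L := [a, b]) (by simp [List.sortedLT_iff_pairwise, hab])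

theorem two_pow_add_two_pow_eq_two_pow_iff {k l c : ℕ} :
    2 ^ k + 2 ^ l = 2 ^ c ↔ k = l ∧ c = k + 1 := by
  constructor
  · intro h
    rcases lt_trichotomy k l with hkl | rfl | hkl
    · simpa [bitIndices_two_pow_add_two_pow_of_lt hkl] using congrArg bitIndices h
    · exact ⟨rfl, Nat.pow_right_injective le_rfl (show 2 ^ c = 2 ^ (k + 1) by rw [← h]; ring)⟩
    · rw [add_comm] at h
      simpa [bitIndices_two_pow_add_two_pow_of_lt hkl] using congrArg bitIndices h
  · rintro ⟨rfl, rfl⟩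
    ring

theorem two_pow_add_two_pow_eq_iff_of_lt {k l a b : ℕ} (hab : a < b) :
    2 ^ k + 2 ^ l = 2 ^ a + 2 ^ b ↔ k = a ∧ l = b ∨ k = b ∧ l = a := by
  constructor
  · intro h
    rcases lt_trichotomy k l with hkl | rfl | hkl
    · have := congrArg bitIndices h
      simp only [bitIndices_two_pow_add_two_pow_of_lt hkl,
        bitIndices_two_pow_add_two_pow_of_lt hab, List.cons.injEq, and_true] at this
      exact Or.inl this
    · have := (two_pow_add_two_pow_eq_two_pow_iff (c := k + 1)).2 ⟨rfl, rfl⟩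
      rw [h, two_pow_add_two_pow_eq_two_pow_iff] at this
      omega
    · rw [add_comm] at h
      have := congrArg bitIndices h
      simp only [bitIndices_two_pow_add_two_pow_of_lt hkl,
        bitIndices_two_pow_add_two_pow_of_lt hab, List.cons.injEq, and_true] at this
      exact Or.inr this.symm
  · rintro (⟨rfl, rfl⟩ | ⟨rfl, rfl⟩)
    · rfl
    · exact add_comm _ _

theorem two_pow_eq_two_mul_add_one_iff {k n : ℕ} : 2 ^ k = 2 * n + 1 ↔ k = 0 ∧ n = 0 := by
  rcases k with _ | k
  · simp [eq_comm]
  · rw [pow_succ]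
    omega

theorem two_pow_eq_two_mul_iff {k n : ℕ} : 2 ^ k = 2 * n ↔ ∃ j, k = j + 1 ∧ 2 ^ j = n := by
  rcases k with _ | k
  · simp only [pow_zero, Nat.right_eq_add]
    omega
  · simp [pow_succ']

end Nat

def powersOfTwo : Set ℕ := Set.range (2 ^ ·)

def sumsOfTwoDistinctPowersOfTwo : Set ℕ := {n | ∃ a b, a < b ∧ 2 ^ a + 2 ^ b = n}

def evenPowersOfTwo : Set ℕ := Set.range fun k => 2 ^ (2 * k)

def oddPowersOfTwo : Set ℕ := Set.range fun k => 2 ^ (2 * k + 1)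

section Catalan

open Finset

theorem indicator_powersOfTwo_mul_indicator_powersOfTwo {R : Type*} [MulZeroOneClass R]
    (p : ℕ × ℕ) : powersOfTwo.indicator (1 : ℕ → R) p.1 * powersOfTwo.indicator 1 p.2 =
      if ∃ k l, p = (2 ^ k, 2 ^ l) then 1 else 0 := by
  obtain ⟨i, j⟩ := p
  by_cases hi : i ∈ powersOfTwo <;> by_cases hj : j ∈ powersOfTwo <;>
    simp_all [powersOfTwo, eq_comm]

theorem sum_antidiagonal_indicator_powersOfTwo {R : Type*} [Semiring R] {m : ℕ} (hm : 2 ≤ m) :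
    ∑ p ∈ antidiagonal m, powersOfTwo.indicator (1 : ℕ → R) p.1 * powersOfTwo.indicator 1 p.2 =
      powersOfTwo.indicator 1 m + 2 * sumsOfTwoDistinctPowersOfTwo.indicator 1 m := by
  simp only [indicator_powersOfTwo_mul_indicator_powersOfTwo]
  by_cases hP : m ∈ powersOfTwo
  · obtain ⟨c, rfl⟩ := hP
    obtain ⟨c, rfl⟩ : ∃ c', c = c' + 1 := Nat.exists_eq_add_one.2
      (Nat.pos_of_ne_zero (by rintro rfl; simp at hm))
    have hB : 2 ^ (c + 1) ∉ sumsOfTwoDistinctPowersOfTwo := by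
      rintro ⟨a, b, hab, h⟩
      exact hab.ne (Nat.two_pow_add_two_pow_eq_two_pow_iff.1 h).1
    rw [sum_eq_single_of_mem (2 ^ c, 2 ^ c) (by simp [pow_succ, mul_two])]
    · simp [hB, powersOfTwo]
    · rintro p hp hne
      rw [if_neg]
      rintro ⟨k, l, rfl⟩
      obtain ⟨rfl, hc⟩ := Nat.two_pow_add_two_pow_eq_two_pow_iff.1 (mem_antidiagonal.1 hp)
      exact hne (by rw [Nat.succ_injective hc])
  by_cases hB : m ∈ sumsOfTwoDistinctPowersOfTwo
  · obtain ⟨a, b, hab, rfl⟩ := hB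
    have hne : ((2 : ℕ) ^ a, (2 : ℕ) ^ b) ≠ (2 ^ b, 2 ^ a) :=
      fun h => (Nat.pow_lt_pow_right one_lt_two hab).ne (Prod.ext_iff.1 h).1
    rw [sum_eq_add_of_mem (2 ^ a, 2 ^ b) (2 ^ b, 2 ^ a) (by simp) (by simp [add_comm]) hne]
    · rw [Set.indicator_of_notMem hP,
        Set.indicator_of_mem (show _ ∈ sumsOfTwoDistinctPowersOfTwo from ⟨a, b, hab, rfl⟩)]
      simp [one_add_one_eq_two]
    · rintro p hp ⟨hpa, hpb⟩
      rw [if_neg]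
      rintro ⟨k, l, rfl⟩
      rcases (Nat.two_pow_add_two_pow_eq_iff_of_lt hab).1 (mem_antidiagonal.1 hp) with
        ⟨rfl, rfl⟩ | ⟨rfl, rfl⟩
      exacts [hpa rfl, hpb rfl]
  · rw [sum_eq_zero, Set.indicator_of_notMem hP, Set.indicator_of_notMem hB]
    · simp
    rintro p hp
    rw [if_neg]
    rintro ⟨k, l, rfl⟩
    have hkl := mem_antidiagonal.1 hp
    rcases lt_trichotomy k l with h | rfl | h
    · exact hB ⟨k, l, h, hkl⟩
    · exact hP ⟨k + 1, by rw [← hkl]; ring⟩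
    · exact hB ⟨l, k, h, by rw [← hkl, add_comm]⟩

theorem Finset.Nat.sum_antidiagonal_add_two_eq {M : Type*} [AddCommMonoid M] {f : ℕ × ℕ → M}
    (hf : ∀ m, f (0, m) = 0 ∧ f (m, 0) = 0) (n : ℕ) :
    ∑ p ∈ antidiagonal n, f (p.1 + 1, p.2 + 1) = ∑ p ∈ antidiagonal (n + 2), f p := by
  rw [Nat.sum_antidiagonal_succ, Nat.sum_antidiagonal_succ', (hf _).1, (hf _).2]
  simp

theorem catalan_cast_zmod_four (n : ℕ) :
    (catalan n : ZMod 4) = powersOfTwo.indicator 1 (n + 1) +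
      2 * sumsOfTwoDistinctPowersOfTwo.indicator 1 (n + 1) := by
  set a : ℕ → ZMod 4 := powersOfTwo.indicator 1
  set b : ℕ → ZMod 4 := sumsOfTwoDistinctPowersOfTwo.indicator 1
  induction n using Nat.strong_induction_on with
  | _ n ih =>
  cases n with
  | zero =>
    have h1 : 1 ∈ powersOfTwo := ⟨0, rfl⟩
    have h1' : 1 ∉ sumsOfTwoDistinctPowersOfTwo := by
      rintro ⟨k, l, -, h⟩
      have := Nat.one_le_two_pow (n := k)
      have := Nat.one_le_two_pow (n := l)
      omega
    simp [a, b, h1, h1']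
  | succ n =>
    have hexpand : ∀ x y z w : ZMod 4,
        (x + 2 * y) * (z + 2 * w) = x * z + 2 * (x * w + y * z) := by
      decide
    have hswap : ∑ p ∈ antidiagonal n, b (p.1 + 1) * a (p.2 + 1) =
        ∑ p ∈ antidiagonal n, a (p.1 + 1) * b (p.2 + 1) := by
      rw [← Nat.sum_antidiagonal_swap]
      simp [mul_comm]
    have hfour : ∀ x : ZMod 4, 2 * (x + x) = 0 := by decide
    have h0 : (0 : ℕ) ∉ powersOfTwo := fun ⟨k, hk⟩ => pow_ne_zero k two_ne_zero hk
    calc (catalan (n + 1) : ZMod 4)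
        = ∑ p ∈ antidiagonal n,
            (a (p.1 + 1) + 2 * b (p.1 + 1)) * (a (p.2 + 1) + 2 * b (p.2 + 1)) := by
          rw [catalan_succ']
          push_cast
          refine sum_congr rfl fun p hp => ?_
          have := mem_antidiagonal.1 hp
          rw [ih p.1 (by omega), ih p.2 (by omega)]
      _ = ∑ p ∈ antidiagonal n, a (p.1 + 1) * a (p.2 + 1) := by
          simp only [hexpand, sum_add_distrib, ← mul_sum, hswap, hfour, add_zero]
      _ = ∑ p ∈ antidiagonal (n + 2), a p.1 * a p.2 :=
          Finset.Nat.sum_antidiagonal_add_two_eq (f := fun p => a p.1 * a p.2)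
            (fun m => by simp [a, h0]) n
      _ = a (n + 1 + 1) + 2 * b (n + 1 + 1) := sum_antidiagonal_indicator_powersOfTwo (by omega)

end Catalan

theorem kKernel_subset_of_decimation_closed {α : Type*} {k : ℕ} {S : Set (ℕ → α)}
    {u : ℕ → α} (hu : u ∈ S) (hS : ∀ f ∈ S, ∀ r < k, (fun n => f (k * n + r)) ∈ S) :
    kKernel k u ⊆ S := by
  suffices h : ∀ e, ∀ f ∈ S, ∀ j < k ^ e, (fun n => f (k ^ e * n + j)) ∈ S by
    rintro g ⟨e, j, hj, rfl⟩
    exact h e u hu j hj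
  intro e
  induction e with
  | zero => simp +contextual
  | succ e ih =>
    intro f hf j hj
    have hk : 0 < k := Nat.pos_of_ne_zero (by rintro rfl; simp at hj)
    have hq : j / k < k ^ e := Nat.div_lt_of_lt_mul (by rwa [← pow_succ'])
    convert ih _ (hS f hf (j % k) (Nat.mod_lt j hk)) (j / k) hq using 3 with n
    conv_lhs => rw [← Nat.div_add_mod j k]
    ring

theorem kKernel_finite_of_mem_span_indicator {R : Type*} [Semiring R] [Finite R] {k : ℕ}
    {F : Set (Set ℕ)} (hF : F.Finite)
    (hF_closed : ∀ s ∈ F, ∀ r < k, (fun n => k * n + r) ⁻¹' s ∈ F) {u : ℕ → R}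
    (hu : u ∈ Submodule.span R ((fun s => s.indicator 1) '' F)) : (kKernel k u).Finite := by
  set N := Submodule.span R ((fun s : Set ℕ => s.indicator (1 : ℕ → R)) '' F)
  have : Module.Finite R N := Module.Finite.iff_fg.2 (Submodule.fg_span (hF.image _))
  have hN : (N : Set (ℕ → R)).Finite := Set.finite_coe_iff.1 (Module.finite_of_finite R)
  refine hN.subset (kKernel_subset_of_decimation_closed hu fun f hf r hr => ?_)
  have hmap : N.map (LinearMap.funLeft R R (fun n => k * n + r)) ≤ N := by
    rw [Submodule.map_span_le]
    rintro _ ⟨s, hs, rfl⟩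
    refine Submodule.subset_span ⟨_, hF_closed s hs r hr, ?_⟩
    ext n
    simp [LinearMap.funLeft_apply, Set.indicator_apply]
  exact hmap ⟨f, hf, rfl⟩

section Decimation

theorem preimage_two_mul_powersOfTwo : (fun n => 2 * n) ⁻¹' powersOfTwo = powersOfTwo := by
  ext n
  simp [powersOfTwo, Nat.two_pow_eq_two_mul_iff]

theorem preimage_two_mul_add_one_powersOfTwo :
    (fun n => 2 * n + 1) ⁻¹' powersOfTwo = {0} := by
  ext n
  simp [powersOfTwo, Nat.two_pow_eq_two_mul_add_one_iff]

theorem preimage_two_mul_sumsOfTwoDistinctPowersOfTwo :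
    (fun n => 2 * n) ⁻¹' sumsOfTwoDistinctPowersOfTwo = sumsOfTwoDistinctPowersOfTwo := by
  ext n
  constructor
  · rintro ⟨_ | a, _ | b, hab, h⟩
    · omega
    · simp only [pow_zero, pow_succ] at h
      omega
    · omega
    · simp only [pow_succ] at h
      exact ⟨a, b, by omega, by omega⟩
  · rintro ⟨a, b, hab, rfl⟩
    exact ⟨a + 1, b + 1, by omega, by simp only [pow_succ]; ring⟩

theorem preimage_two_mul_add_one_sumsOfTwoDistinctPowersOfTwo :
    (fun n => 2 * n + 1) ⁻¹' sumsOfTwoDistinctPowersOfTwo = powersOfTwo := by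
  ext n
  constructor
  · rintro ⟨_ | a, _ | b, hab, h⟩
    · omega
    · simp only [pow_zero, pow_succ] at h
      exact ⟨b, by simp only; omega⟩
    · omega
    · simp only [pow_succ] at h
      omega
  · rintro ⟨b, rfl⟩
    exact ⟨0, b + 1, by omega, by simp only [pow_zero, pow_succ]; ring⟩

theorem preimage_two_mul_evenPowersOfTwo :
    (fun n => 2 * n) ⁻¹' evenPowersOfTwo = oddPowersOfTwo := by
  ext n
  simp only [Set.mem_preimage, evenPowersOfTwo, oddPowersOfTwo, Set.mem_range,
    Nat.two_pow_eq_two_mul_iff]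
  constructor
  · rintro ⟨k, j, hkj, rfl⟩
    exact ⟨k - 1, by congr 1; omega⟩
  · rintro ⟨k, rfl⟩
    exact ⟨k + 1, 2 * k + 1, by ring, rfl⟩

theorem preimage_two_mul_add_one_evenPowersOfTwo :
    (fun n => 2 * n + 1) ⁻¹' evenPowersOfTwo = {0} := by
  ext n
  simp [evenPowersOfTwo, Nat.two_pow_eq_two_mul_add_one_iff]

theorem preimage_two_mul_oddPowersOfTwo :
    (fun n => 2 * n) ⁻¹' oddPowersOfTwo = evenPowersOfTwo := by
  ext n
  simp [evenPowersOfTwo, oddPowersOfTwo, Nat.two_pow_eq_two_mul_iff]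

theorem preimage_two_mul_add_one_oddPowersOfTwo :
    (fun n => 2 * n + 1) ⁻¹' oddPowersOfTwo = ∅ := by
  ext n
  simp [oddPowersOfTwo, Nat.two_pow_eq_two_mul_add_one_iff]

theorem preimage_two_mul_image_add_one (s : Set ℕ) :
    (fun n => 2 * n) ⁻¹' ((· + 1) '' s) = (· + 1) '' ((fun n => 2 * n + 1) ⁻¹' s) := by
  ext n
  simp only [Set.mem_preimage, Set.mem_image]
  constructor
  · rintro ⟨x, hx, hxn⟩
    exact ⟨n - 1, by convert hx using 1; omega, by omega⟩
  · rintro ⟨y, hy, rfl⟩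
    exact ⟨2 * y + 1, hy, by ring⟩

theorem preimage_two_mul_add_one_image_add_one (s : Set ℕ) :
    (fun n => 2 * n + 1) ⁻¹' ((· + 1) '' s) = (fun n => 2 * n) ⁻¹' s := by
  ext n
  simp

end Decimation

def stielSets : Set (Set ℕ) :=
  {∅, {0}, {1}, {2}, powersOfTwo, (· + 1) '' powersOfTwo, sumsOfTwoDistinctPowersOfTwo,
    (· + 1) '' sumsOfTwoDistinctPowersOfTwo, evenPowersOfTwo, oddPowersOfTwo,
    (· + 1) '' evenPowersOfTwo}

theorem preimage_mem_stielSets {s : Set ℕ} (hs : s ∈ stielSets) {r : ℕ} (hr : r < 2) :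
    (fun n => 2 * n + r) ⁻¹' s ∈ stielSets := by
  have h0 : (fun n => 2 * n) ⁻¹' {0} = {0} := by ext; simp
  have h1 : (fun n => 2 * n) ⁻¹' {1} = ∅ := by ext; simp
  have h2 : (fun n => 2 * n) ⁻¹' {2} = {1} := by ext; simp
  have h0' : (fun n => 2 * n + 1) ⁻¹' {0} = ∅ := by ext; simp
  have h1' : (fun n => 2 * n + 1) ⁻¹' {1} = {0} := by ext; simp
  have h2' : (fun n => 2 * n + 1) ⁻¹' {2} = ∅ := by ext; simp
  interval_cases r <;>
  rcases hs with rfl | rfl | rfl | rfl | rfl | rfl | rfl | rfl | rfl | rfl | rfl <;>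
  simp [stielSets, h0, h1, h2, h0', h1', h2', preimage_two_mul_powersOfTwo,
    preimage_two_mul_add_one_powersOfTwo, preimage_two_mul_sumsOfTwoDistinctPowersOfTwo,
    preimage_two_mul_add_one_sumsOfTwoDistinctPowersOfTwo, preimage_two_mul_evenPowersOfTwo,
    preimage_two_mul_add_one_evenPowersOfTwo, preimage_two_mul_oddPowersOfTwo,
    preimage_two_mul_add_one_oddPowersOfTwo, preimage_two_mul_image_add_one,
    preimage_two_mul_add_one_image_add_one]

namespace PowerSeries

variable {R : Type*} [Semiring R]

theorem mk_indicator_singleton (m : ℕ) : mk (({m} : Set ℕ).indicator (1 : ℕ → R)) = X ^ m := by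
  ext n
  simp [coeff_X_pow, Pi.single_apply]

theorem X_mul_mk_indicator (s : Set ℕ) :
    X * mk (s.indicator (1 : ℕ → R)) = mk (((· + 1) '' s).indicator 1) := by
  ext (_ | n)
  · simp
  · simp [coeff_succ_X_mul, Set.indicator_apply]

end PowerSeries

theorem map_Sinf {R : Type*} [Ring R] :
    Sinf.map (Int.castRingHom R) = mk (powersOfTwo.indicator 1) := by
  ext n
  simp [Sinf, powersOfTwo, Set.indicator_apply, eq_comm]

theorem map_Seinf {R : Type*} [Ring R] :
    Seinf.map (Int.castRingHom R) = mk (evenPowersOfTwo.indicator 1) := by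
  ext n
  simp [Seinf, evenPowersOfTwo, Set.indicator_apply, eq_comm]

theorem X_mul_map_phi : X * phi.map (Int.castRingHom (ZMod 4)) =
    mk (powersOfTwo.indicator 1) + 2 * mk (sumsOfTwoDistinctPowersOfTwo.indicator 1) := by
  ext (_ | n)
  · simp [powersOfTwo, sumsOfTwoDistinctPowersOfTwo]
  · simp [← map_ofNat C 2, coeff_succ_X_mul, phi, catalan_cast_zmod_four]

theorem v_eq_indicators :
    v = (3 : ZMod 4) • powersOfTwo.indicator 1 + (2 : ZMod 4) •
      (sumsOfTwoDistinctPowersOfTwo.indicator 1 +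
        ((· + 1) '' sumsOfTwoDistinctPowersOfTwo).indicator 1 +
        ((· + 1) '' evenPowersOfTwo).indicator 1 + ({1} : Set ℕ).indicator 1 +
        ({2} : Set ℕ).indicator 1) := by
  have h4 : (4 : (ZMod 4)⟦X⟧) = 0 := by
    rw [← map_ofNat C 4, show (OfNat.ofNat 4 : ZMod 4) = 0 from rfl, map_zero]
  have hmap : (2 * X + 2 * X ^ 2 + (2 + 3 * X) * Sinf + 2 * X * Seinf +
      (X + X ^ 2) * phi).map (Int.castRingHom (ZMod 4)) =
      C 3 * mk (powersOfTwo.indicator 1) +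
        C 2 * (mk (sumsOfTwoDistinctPowersOfTwo.indicator 1) +
          mk (((· + 1) '' sumsOfTwoDistinctPowersOfTwo).indicator 1) +
          mk (((· + 1) '' evenPowersOfTwo).indicator 1) + mk (({1} : Set ℕ).indicator 1) +
          mk (({2} : Set ℕ).indicator 1)) := by
    simp only [map_add, map_mul, map_pow, map_X, map_ofNat, map_Sinf, map_Seinf,
      mk_indicator_singleton, ← X_mul_mk_indicator]
    -- the coefficient of `X * S_∞` is `3 + 1 = 4 = 0`: from `3X * S_∞` and from `X * (X * φ)`
    linear_combination (1 + X) * X_mul_map_phi + (X * mk (powersOfTwo.indicator 1)) * h4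
  funext i
  rw [v, ← eq_intCast (Int.castRingHom (ZMod 4)), ← coeff_map, hmap]
  simp [coeff_C_mul, mul_add]

/-- (Theorem 1.2, automaticity part.) `Stiel_r` modulo 4 is 2-automatic:
its 2-kernel is finite. -/
theorem stmt3 : (kKernel 2 v).Finite := by
  refine kKernel_finite_of_mem_span_indicator (by simp [stielSets])
    (fun s hs r hr => preimage_mem_stielSets hs hr) ?_
  have hmem : ∀ s ∈ stielSets, s.indicator (1 : ℕ → ZMod 4) ∈
      Submodule.span (ZMod 4) ((fun s => s.indicator 1) '' stielSets) :=
    fun s hs => Submodule.subset_span (Set.mem_image_of_mem _ hs)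
  rw [v_eq_indicators]
  refine add_mem (Submodule.smul_mem _ _ (hmem _ ?_)) (Submodule.smul_mem _ _
    (add_mem (add_mem (add_mem (add_mem (hmem _ ?_) (hmem _ ?_)) (hmem _ ?_)) (hmem _ ?_))
      (hmem _ ?_))) <;>
  simp [stielSets]
end

section
/- Let r be the Rudin–Shapiro sequence and Q_n(x) the convergent denominators for r. Then for all j ≥ 2: (1) Q_{2^{2j}−2}(x) ≡ 1 + 2x + 2(1 + x)·S_{2j-2}(x) (mod 4); (2) Q_{2^{2j+1}−2}(x) ≡ 1 + 2(1 + x)·S_{2j-1}(x) (mod 4); (3) Q_{2^{2j}−1}(x) ≡ 1 + 2x² + 2x⁵ + 2x·S^o_{j-2}(x) + (3 + 2x³)·S_{2j-2}(x) + 2(1 + x)·T_{2j-2}(x) + x^{2^{2j-1}} (mod 4); (4) Q_{2^{2j+1}−1}(x) ≡ 1 + 2x² + 2x⁵ + 2x·S^e_{j-1}(x) + (3 + 2x³)·S_{2j-1}(x) + 2(1 + x)·T_{2j-1}(x) + x^{2^{2j}} (mod 4). -/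
open Polynomial

/-- The elementary matrix `[[0, c_i x],[1,1]]` used to build the convergents of a
Stieltjes continued fraction. -/
noncomputable def step (c : ℕ → ℤ) (i : ℕ) : Matrix (Fin 2) (Fin 2) (Polynomial ℤ) :=
  !![0, Polynomial.C (c i) * Polynomial.X; 1, 1]

/-- `S_n(x) = Σ_{i=0}^{n} x^{2^i}`. -/
noncomputable def Spoly (n : ℕ) : Polynomial ℤ :=
  ∑ i ∈ Finset.range (n + 1), Polynomial.X ^ (2 ^ i)

/-- `S^e_n(x) = Σ_{i=0}^{n} x^{2^{2i}}`. -/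
noncomputable def Sepoly (n : ℕ) : Polynomial ℤ :=
  ∑ i ∈ Finset.range (n + 1), Polynomial.X ^ (2 ^ (2 * i))

/-- `S^o_n(x) = Σ_{i=0}^{n} x^{2^{2i+1}}`. -/
noncomputable def Sopoly (n : ℕ) : Polynomial ℤ :=
  ∑ i ∈ Finset.range (n + 1), Polynomial.X ^ (2 ^ (2 * i + 1))

/-- `T_n(x) = Σ_{i=3}^{n} Σ_{k=2}^{i-1} x^{2^i + 2^k}` (so `T_2 = 0`). -/
noncomputable def Tpoly (n : ℕ) : Polynomial ℤ :=
  ∑ i ∈ Finset.Icc 3 n, ∑ k ∈ Finset.Icc 2 (i - 1), Polynomial.X ^ (2 ^ i + 2 ^ k)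

/-!
Group the steps into dyadic blocks `A_m = ∏_{i < 2^m} step r i` and
`B_m = ∏_{2^m ≤ i < 2^(m+1)} step r i`. For `t < 2^m` the Rudin–Shapiro recursion gives
`r (2^(m+1) + t) = r t` and `r (2^(m+1) + 2^m + t) = -r (2^m + t)`, hence
`A_(m+1) = A_m B_m` and `B_(m+1) = A_m B_m(-x)`. Modulo 4 both blocks have an explicit closed
form for every `m ≥ 3`, which propagates from one level to the next thanks to the identity
`S_n² = S_(n+1) - x + 2 T_n + 2 (x + x²) S_n - 2 (x² + x³ + x⁴)` (`n ≥ 1`). The polynomials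
`Q_(2^m - 2)` and `Q_(2^m - 1)` form the bottom row of `A_m`.
-/

noncomputable section

theorem neg_one_pow_two_pow_succ_add (m u : ℕ) : (-1 : ℤ) ^ (2 ^ (m + 1) + u) = (-1) ^ u := by
  rw [pow_add, (Nat.even_pow.2 ⟨even_two, m.succ_ne_zero⟩).neg_one_pow, one_mul]

theorem rudinShapiro_two_pow_add {r : ℕ → ℤ} (hre : ∀ n, r (2 * n) = r n)
    (hro : ∀ n, r (2 * n + 1) = (-1) ^ n * r n) (m : ℕ) :
    ∀ t < 2 ^ m, r (2 ^ (m + 1) + t) = r t := by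
  induction m with
  | zero =>
    intro t ht
    obtain rfl : t = 0 := by omega
    simpa using (hre 1).trans (by simpa using hro 0)
  | succ m ih =>
    intro t ht
    rw [pow_succ] at ht
    obtain ⟨u, rfl | rfl⟩ := Nat.even_or_odd' t
    · rw [show 2 ^ (m + 2) + 2 * u = 2 * (2 ^ (m + 1) + u) by ring, hre, hre, ih u (by omega)]
    · rw [show 2 ^ (m + 2) + (2 * u + 1) = 2 * (2 ^ (m + 1) + u) + 1 by ring, hro, hro,
        ih u (by omega), neg_one_pow_two_pow_succ_add]

theorem rudinShapiro_two_pow_add_two_pow_add {r : ℕ → ℤ} (hre : ∀ n, r (2 * n) = r n)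
    (hro : ∀ n, r (2 * n + 1) = (-1) ^ n * r n) (m : ℕ) :
    ∀ t < 2 ^ m, r (2 ^ (m + 1) + 2 ^ m + t) = -r (2 ^ m + t) := by
  induction m with
  | zero =>
    intro t ht
    obtain rfl : t = 0 := by omega
    simpa using hro 1
  | succ m ih =>
    intro t ht
    rw [pow_succ] at ht
    obtain ⟨u, rfl | rfl⟩ := Nat.even_or_odd' t
    · rw [show 2 ^ (m + 2) + 2 ^ (m + 1) + 2 * u = 2 * (2 ^ (m + 1) + 2 ^ m + u) by ring,
        show 2 ^ (m + 1) + 2 * u = 2 * (2 ^ m + u) by ring, hre, hre, ih u (by omega)]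
    · rw [show 2 ^ (m + 2) + 2 ^ (m + 1) + (2 * u + 1) = 2 * (2 ^ (m + 1) + (2 ^ m + u)) + 1 by
          ring,
        show 2 ^ (m + 1) + (2 * u + 1) = 2 * (2 ^ m + u) + 1 by ring, hro, hro, ← add_assoc,
        ih u (by omega), add_assoc, neg_one_pow_two_pow_succ_add, mul_neg]

def stepProd (c : ℕ → ℤ) (a n : ℕ) : Matrix (Fin 2) (Fin 2) ℤ[X] :=
  ((List.range n).map fun t => step c (a + t)).prod

theorem stepProd_add (c : ℕ → ℤ) (a n n' : ℕ) :
    stepProd c a (n + n') = stepProd c a n * stepProd c (a + n) n' := by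
  simp only [stepProd, List.range_add, List.map_append, List.prod_append, List.map_map]
  congr 3
  ext t
  simp [add_assoc]

theorem stepProd_congr {c : ℕ → ℤ} {a a' n : ℕ} (h : ∀ t < n, c (a + t) = c (a' + t)) :
    stepProd c a n = stepProd c a' n := by
  simp only [stepProd]
  congr 1
  refine List.map_congr_left fun t ht => ?_
  rw [step, step, h t (List.mem_range.1 ht)]

theorem step_eq_mapMatrix_comp_neg_X {c : ℕ → ℤ} {i j : ℕ} (h : c i = -c j) :
    step c i = (compRingHom (-X : ℤ[X])).mapMatrix (step c j) := by
  ext a b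
  fin_cases a <;> fin_cases b <;> simp [step, h]

theorem stepProd_eq_mapMatrix_comp_neg_X {c : ℕ → ℤ} {a a' n : ℕ}
    (h : ∀ t < n, c (a + t) = -c (a' + t)) :
    stepProd c a n = (compRingHom (-X : ℤ[X])).mapMatrix (stepProd c a' n) := by
  simp only [stepProd, map_list_prod, List.map_map]
  congr 1
  refine List.map_congr_left fun t ht => ?_
  exact step_eq_mapMatrix_comp_neg_X (h t (List.mem_range.1 ht))

theorem stepProd_zero_two_pow_succ (c : ℕ → ℤ) (m : ℕ) :
    stepProd c 0 (2 ^ (m + 1)) = stepProd c 0 (2 ^ m) * stepProd c (2 ^ m) (2 ^ m) := by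
  rw [pow_succ, mul_two, stepProd_add, zero_add]

theorem stepProd_two_pow_succ {r : ℕ → ℤ} (hre : ∀ n, r (2 * n) = r n)
    (hro : ∀ n, r (2 * n + 1) = (-1) ^ n * r n) (m : ℕ) :
    stepProd r (2 ^ (m + 1)) (2 ^ (m + 1)) =
      stepProd r 0 (2 ^ m) * (compRingHom (-X : ℤ[X])).mapMatrix (stepProd r (2 ^ m) (2 ^ m)) := by
  rw [pow_succ 2 m, mul_two, stepProd_add, ← mul_two, ← pow_succ]
  congr 1
  · exact stepProd_congr fun t ht => by rw [rudinShapiro_two_pow_add hre hro m t ht, zero_add]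
  · exact stepProd_eq_mapMatrix_comp_neg_X fun t ht =>
      rudinShapiro_two_pow_add_two_pow_add hre hro m t ht

theorem Spoly_succ (n : ℕ) : Spoly (n + 1) = Spoly n + X ^ 2 ^ (n + 1) :=
  Finset.sum_range_succ _ _

theorem Spoly_one : Spoly 1 = X + X ^ 2 := by
  simp [Spoly, Finset.sum_range_succ]

theorem sum_Icc_two_X_pow_two_pow {n : ℕ} (hn : 1 ≤ n) :
    ∑ k ∈ Finset.Icc 2 n, (X : ℤ[X]) ^ 2 ^ k = Spoly n - X - X ^ 2 := by
  induction n, hn using Nat.le_induction with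
  | base => simp [Spoly_one]
  | succ n hn ih => rw [Finset.sum_Icc_succ_top (by omega), ih, Spoly_succ]; ring

theorem Tpoly_one : Tpoly 1 = 0 := by
  simp [Tpoly]

theorem Tpoly_succ {n : ℕ} (hn : 1 ≤ n) :
    Tpoly (n + 1) = Tpoly n + X ^ 2 ^ (n + 1) * (Spoly n - X - X ^ 2) := by
  rcases hn.eq_or_lt with rfl | hn
  · simp [Tpoly, Spoly_one]
  · rw [Tpoly, Finset.sum_Icc_succ_top (by omega), Nat.add_sub_cancel, ← Tpoly,
      ← sum_Icc_two_X_pow_two_pow hn.le, Finset.mul_sum]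
    simp only [pow_add]

theorem Spoly_sq {n : ℕ} (hn : 1 ≤ n) :
    Spoly n ^ 2 = Spoly (n + 1) - X + 2 * Tpoly n + 2 * (X + X ^ 2) * Spoly n
      - 2 * (X ^ 2 + X ^ 3 + X ^ 4) := by
  induction n, hn using Nat.le_induction with
  | base => rw [Spoly_succ 1, Spoly_one, Tpoly_one]; ring
  | succ n hn ih =>
    rw [Spoly_succ (n + 1), Tpoly_succ (by omega), Spoly_succ n, pow_succ 2 (n + 1), pow_mul]
    rw [Spoly_succ] at ih
    linear_combination ih

theorem Sepoly_succ (k : ℕ) : Sepoly (k + 1) = Sepoly k + X ^ 2 ^ (2 * k + 2) :=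
  Finset.sum_range_succ _ _

theorem Sopoly_succ (k : ℕ) : Sopoly (k + 1) = Sopoly k + X ^ 2 ^ (2 * k + 3) :=
  Finset.sum_range_succ _ _

theorem Spoly_two_mul_add_one (k : ℕ) : Spoly (2 * k + 1) = Sepoly k + Sopoly k := by
  induction k with
  | zero => simp [Spoly_one, Sepoly, Sopoly]
  | succ k ih =>
    rw [show 2 * (k + 1) + 1 = 2 * k + 1 + 1 + 1 by ring, Spoly_succ, Spoly_succ, ih, Sepoly_succ,
      Sopoly_succ]
    ring

theorem Spoly_two_mul_add_two (k : ℕ) : Spoly (2 * k + 2) = Sepoly (k + 1) + Sopoly k := by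
  rw [Spoly_succ, Spoly_two_mul_add_one, Sepoly_succ]
  ring

theorem Spoly_comp_neg_X (n : ℕ) : (Spoly n).comp (-X) = Spoly n - 2 * X := by
  simp [Spoly, Finset.sum_range_succ', Nat.even_pow]
  ring

theorem Sepoly_comp_neg_X (k : ℕ) : (Sepoly k).comp (-X) = Sepoly k - 2 * X := by
  simp [Sepoly, Finset.sum_range_succ', Nat.even_pow]
  ring

theorem Sopoly_comp_neg_X (k : ℕ) : (Sopoly k).comp (-X) = Sopoly k := by
  simp [Sopoly, Nat.even_pow]

theorem Tpoly_comp_neg_X (n : ℕ) : (Tpoly n).comp (-X) = Tpoly n := by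
  simp only [Tpoly, sum_comp, pow_comp, X_comp]
  refine Finset.sum_congr rfl fun i hi => Finset.sum_congr rfl fun k hk => ?_
  simp only [Finset.mem_Icc] at hi hk
  exact ((Nat.even_pow.2 ⟨even_two, by omega⟩).add (Nat.even_pow.2 ⟨even_two, by omega⟩)).neg_pow X

section BlockForm

variable {R : Type*} [CommRing R]

/- The closed form of `A_m` modulo 4 for `m ≥ 3` (see `HasBlockForm`) is
`blockFormA X S_(m-2) T_(m-2) u X^(2^(m-1)) e`, with `u = S^e_k, e = 0` for `m = 2k + 3` and
`u = S^o_k, e = 1` for `m = 2k + 4`; `blockFormQ` is its entry `Q_(2^m-1)`, and `blockFormB` with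
the same arguments is the closed form of `B_m`. -/
def blockFormQ (x s t u y : R) : R :=
  1 + y + 3 * s + 2 * t + 2 * x * u + 2 * x * t + 2 * x ^ 2 + 2 * x ^ 3 * s + 2 * x ^ 5

def blockFormA (x s t u y e : R) : Matrix (Fin 2) (Fin 2) R :=
  !![blockFormQ x s t u y + 3 + 2 * s,
      x + 2 * x * u + 2 * x * t + 2 * e * x ^ 2 + 2 * x ^ 3 + 2 * x ^ 3 * s + 2 * x ^ 4 + 2 * x ^ 5;
    1 + 2 * (1 + x) * s + 2 * e * x, blockFormQ x s t u y]

def blockFormB (x s t u y e : R) : Matrix (Fin 2) (Fin 2) R :=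
  blockFormA x s t u y e + (2 * x) • !![s, s + x; 1, s]

theorem RingHom.mapMatrix_blockFormB {S : Type*} [CommRing S] (f : R →+* S) (x s t u y e : R) :
    f.mapMatrix (blockFormB x s t u y e) = blockFormB (f x) (f s) (f t) (f u) (f y) (f e) := by
  ext i j
  fin_cases i <;> fin_cases j <;> simp [blockFormB, blockFormA, blockFormQ, map_ofNat]

variable [CharP R 4]

set_option maxHeartbeats 1000000 in
theorem blockFormA_mul_blockFormB (x s t u y e : R)
    (hs : s ^ 2 = s + y - x + 2 * t + 2 * (x + x ^ 2) * s - 2 * (x ^ 2 + x ^ 3 + x ^ 4)) :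
    blockFormA x s t u y e * blockFormB x s t u y e =
      blockFormA x (s + y) (t + y * (s - x - x ^ 2)) (s - u) (y ^ 2) (1 - e) := by
  -- Once `y` is eliminated, both sides are polynomials in `x, s, t, u, e` that agree modulo 4;
  -- `e` occurs only as `2 e`, so no relation `e ^ 2 = e` is needed.
  obtain rfl : y = s ^ 2 - s + x - 2 * t - 2 * (x + x ^ 2) * s + 2 * (x ^ 2 + x ^ 3 + x ^ 4) := by
    linear_combination -hs
  ext i j
  fin_cases i <;> fin_cases j <;>
    simp [blockFormA, blockFormB, blockFormQ, Matrix.mul_apply, Fin.sum_univ_two] <;>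
    (rw [← sub_eq_zero]; ring_nf; reduce_mod_char!)

set_option maxHeartbeats 1000000 in
theorem blockFormA_mul_blockFormB_neg (x s t u y e : R)
    (hs : s ^ 2 = s + y - x + 2 * t + 2 * (x + x ^ 2) * s - 2 * (x ^ 2 + x ^ 3 + x ^ 4)) :
    blockFormA x s t u y e * blockFormB (-x) (s - 2 * x) t (u - 2 * (1 - e) * x) y e =
      blockFormB x (s + y) (t + y * (s - x - x ^ 2)) (s - u) (y ^ 2) (1 - e) := by
  obtain rfl : y = s ^ 2 - s + x - 2 * t - 2 * (x + x ^ 2) * s + 2 * (x ^ 2 + x ^ 3 + x ^ 4) := by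
    linear_combination -hs
  ext i j
  fin_cases i <;> fin_cases j <;>
    simp [blockFormA, blockFormB, blockFormQ, Matrix.mul_apply, Fin.sum_univ_two] <;>
    (rw [← sub_eq_zero]; ring_nf; reduce_mod_char!)

end BlockForm

def mod4 : ℤ[X] →+* (ZMod 4)[X] :=
  mapRingHom (Int.castRingHom (ZMod 4))

theorem mod4_X : mod4 X = X :=
  map_X _

theorem mod4_comp_neg_X (p : ℤ[X]) : mod4 (p.comp (-X)) = (mod4 p).comp (-X) := by
  simp [mod4, map_comp]

theorem mapMatrix_mod4_comp_neg_X (M : Matrix (Fin 2) (Fin 2) ℤ[X]) :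
    mod4.mapMatrix ((compRingHom (-X : ℤ[X])).mapMatrix M) =
      (compRingHom (-X : (ZMod 4)[X])).mapMatrix (mod4.mapMatrix M) :=
  Matrix.ext fun i j => mod4_comp_neg_X (M i j)

def HasBlockForm (r : ℕ → ℤ) (m : ℕ) (s t u y e : (ZMod 4)[X]) : Prop :=
  mod4.mapMatrix (stepProd r 0 (2 ^ m)) = blockFormA X s t u y e ∧
    mod4.mapMatrix (stepProd r (2 ^ m) (2 ^ m)) = blockFormB X s t u y e

theorem HasBlockForm.succ {r : ℕ → ℤ} (hre : ∀ n, r (2 * n) = r n)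
    (hro : ∀ n, r (2 * n + 1) = (-1) ^ n * r n) {m n : ℕ} (hn : 1 ≤ n) {u e : (ZMod 4)[X]}
    (hu : u.comp (-X) = u - 2 * (1 - e) * X) (he : e.comp (-X) = e)
    (h : HasBlockForm r m (mod4 (Spoly n)) (mod4 (Tpoly n)) u (X ^ 2 ^ (n + 1)) e) :
    HasBlockForm r (m + 1) (mod4 (Spoly (n + 1))) (mod4 (Tpoly (n + 1))) (mod4 (Spoly n) - u)
      (X ^ 2 ^ (n + 2)) (1 - e) := by
  have hsq := congrArg mod4 (Spoly_sq hn)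
  simp only [map_sub, map_add, map_mul, map_pow, map_ofNat, mod4_X, Spoly_succ] at hsq
  have hS : mod4 (Spoly (n + 1)) = mod4 (Spoly n) + X ^ 2 ^ (n + 1) := by
    rw [Spoly_succ, map_add, map_pow, mod4_X]
  have hT : mod4 (Tpoly (n + 1)) =
      mod4 (Tpoly n) + X ^ 2 ^ (n + 1) * (mod4 (Spoly n) - X - X ^ 2) := by
    simp only [Tpoly_succ hn, map_add, map_mul, map_sub, map_pow, mod4_X]
  have hy : (X : (ZMod 4)[X]) ^ 2 ^ (n + 2) = (X ^ 2 ^ (n + 1)) ^ 2 := by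
    rw [← pow_mul, ← pow_succ]
  rw [HasBlockForm, hS, hT, hy]
  constructor
  · rw [stepProd_zero_two_pow_succ, map_mul, h.1, h.2, blockFormA_mul_blockFormB _ _ _ _ _ _ hsq]
  · rw [stepProd_two_pow_succ hre hro, map_mul, h.1, mapMatrix_mod4_comp_neg_X, h.2,
      RingHom.mapMatrix_blockFormB]
    simp only [coe_compRingHom_apply, X_comp, hu, he, ← mod4_comp_neg_X, Spoly_comp_neg_X,
      Tpoly_comp_neg_X, map_sub, map_mul, map_ofNat, mod4_X, pow_comp]
    rw [(Nat.even_pow.2 ⟨even_two, by omega⟩).neg_pow]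
    exact blockFormA_mul_blockFormB_neg _ _ _ _ _ _ hsq

theorem hasBlockForm_three {r : ℕ → ℤ} (hr0 : r 0 = 1) (hre : ∀ n, r (2 * n) = r n)
    (hro : ∀ n, r (2 * n + 1) = (-1) ^ n * r n) :
    HasBlockForm r 3 (mod4 (Spoly 1)) (mod4 (Tpoly 1)) (mod4 (Sepoly 0)) (X ^ 4) 0 := by
  set M : Matrix (Fin 2) (Fin 2) ℤ[X] := !![0, X; 1, 1]
  set M' : Matrix (Fin 2) (Fin 2) ℤ[X] := !![0, -X; 1, 1]
  have hr1 : r 1 = 1 := by simpa [hr0] using hro 0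
  have hA : stepProd r 0 (2 ^ 0) = M := by simp [stepProd, step, hr0, M]
  have hB : stepProd r (2 ^ 0) (2 ^ 0) = M := by simp [stepProd, step, hr1, M]
  have hψ : (compRingHom (-X : ℤ[X])).mapMatrix M = M' := by
    ext i j : 1; fin_cases i <;> fin_cases j <;> simp [M, M']
  have hψ' : (compRingHom (-X : ℤ[X])).mapMatrix M' = M := by
    ext i j : 1; fin_cases i <;> fin_cases j <;> simp [M, M']
  have hA3 : stepProd r 0 (2 ^ 3) = M * M * (M * M') * (M * M * (M' * M)) := by
    simp only [stepProd_zero_two_pow_succ, stepProd_two_pow_succ hre hro, map_mul, hA, hB, hψ, hψ']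
  have hB3 : stepProd r (2 ^ 3) (2 ^ 3) = M * M * (M * M') * (M' * M' * (M * M')) := by
    simp only [stepProd_zero_two_pow_succ, stepProd_two_pow_succ hre hro, map_mul, hA, hB, hψ, hψ']
  rw [HasBlockForm, hA3, hB3, Spoly_one, Tpoly_one]
  simp only [Sepoly, zero_add, Finset.range_one, Finset.sum_singleton, mul_zero, pow_zero, pow_one]
  constructor <;> ext i j : 1 <;> fin_cases i <;> fin_cases j <;>
    simp [M, M', blockFormB, blockFormA, blockFormQ, mod4_X] <;>
    (rw [← sub_eq_zero]; ring_nf; reduce_mod_char!)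

theorem hasBlockForm_even_of_odd {r : ℕ → ℤ} (hre : ∀ n, r (2 * n) = r n)
    (hro : ∀ n, r (2 * n + 1) = (-1) ^ n * r n) {k : ℕ}
    (h : HasBlockForm r (2 * k + 3) (mod4 (Spoly (2 * k + 1))) (mod4 (Tpoly (2 * k + 1)))
      (mod4 (Sepoly k)) (X ^ 2 ^ (2 * k + 2)) 0) :
    HasBlockForm r (2 * k + 4) (mod4 (Spoly (2 * k + 2))) (mod4 (Tpoly (2 * k + 2)))
      (mod4 (Sopoly k)) (X ^ 2 ^ (2 * k + 3)) 1 := by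
  have := h.succ hre hro (by omega)
    (by simp [← mod4_comp_neg_X, Sepoly_comp_neg_X, mod4_X, map_ofNat]) (by simp)
  rwa [← map_sub, Spoly_two_mul_add_one, add_sub_cancel_left, sub_zero] at this

theorem hasBlockForm_odd_of_even {r : ℕ → ℤ} (hre : ∀ n, r (2 * n) = r n)
    (hro : ∀ n, r (2 * n + 1) = (-1) ^ n * r n) {k : ℕ}
    (h : HasBlockForm r (2 * k + 4) (mod4 (Spoly (2 * k + 2))) (mod4 (Tpoly (2 * k + 2)))
      (mod4 (Sopoly k)) (X ^ 2 ^ (2 * k + 3)) 1) :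
    HasBlockForm r (2 * (k + 1) + 3) (mod4 (Spoly (2 * (k + 1) + 1)))
      (mod4 (Tpoly (2 * (k + 1) + 1))) (mod4 (Sepoly (k + 1))) (X ^ 2 ^ (2 * (k + 1) + 2)) 0 := by
  have := h.succ hre hro (by omega) (by simp [← mod4_comp_neg_X, Sopoly_comp_neg_X]) (by simp)
  rwa [← map_sub, Spoly_two_mul_add_two, add_sub_cancel_right, sub_self] at this

theorem hasBlockForm_odd {r : ℕ → ℤ} (hr0 : r 0 = 1) (hre : ∀ n, r (2 * n) = r n)
    (hro : ∀ n, r (2 * n + 1) = (-1) ^ n * r n) (k : ℕ) :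
    HasBlockForm r (2 * k + 3) (mod4 (Spoly (2 * k + 1))) (mod4 (Tpoly (2 * k + 1)))
      (mod4 (Sepoly k)) (X ^ 2 ^ (2 * k + 2)) 0 := by
  induction k with
  | zero => exact hasBlockForm_three hr0 hre hro
  | succ k ih => exact hasBlockForm_odd_of_even hre hro (hasBlockForm_even_of_odd hre hro ih)

theorem Q_two_pow_sub_eq_stepProd {r : ℕ → ℤ} {P Q : ℕ → ℤ[X]}
    (hPQ : ∀ n : ℕ, 1 ≤ n →
      !![P (n - 1), P n; Q (n - 1), Q n] = ((List.range (n + 1)).map (step r)).prod)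
    {m : ℕ} (hm : 1 ≤ m) :
    Q (2 ^ m - 2) = stepProd r 0 (2 ^ m) 1 0 ∧ Q (2 ^ m - 1) = stepProd r 0 (2 ^ m) 1 1 := by
  have h2 : 2 ≤ 2 ^ m := le_self_pow₀ one_le_two (by omega) |>.trans' (by norm_num)
  have h := hPQ (2 ^ m - 1) (by omega)
  rw [Nat.sub_add_cancel (by omega), Nat.sub_sub] at h
  simp only [stepProd, zero_add, ← h]
  simp

theorem coeff_modEq_of_mod4_eq {p q : ℤ[X]} (h : mod4 p = mod4 q) (i : ℕ) :
    p.coeff i ≡ q.coeff i [ZMOD 4] := by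
  have hi := congrArg (coeff · i) h
  simp only [mod4, coe_mapRingHom, coeff_map, eq_intCast] at hi
  exact (ZMod.intCast_eq_intCast_iff _ _ 4).1 hi

theorem stmt13_general (r : ℕ → ℤ) (hr0 : r 0 = 1)
    (hre : ∀ n, r (2 * n) = r n) (hro : ∀ n, r (2 * n + 1) = (-1) ^ n * r n)
    (P Q : ℕ → Polynomial ℤ)
    (hPQ : ∀ n : ℕ, 1 ≤ n →
      !![P (n - 1), P n; Q (n - 1), Q n] = ((List.range (n + 1)).map (step r)).prod) :
    ∀ j : ℕ, 2 ≤ j →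
      (∀ i : ℕ, (Q (2 ^ (2 * j) - 2)).coeff i ≡
        (1 + 2 * X + 2 * (1 + X) * Spoly (2 * j - 2) :
          Polynomial ℤ).coeff i [ZMOD 4]) ∧
      (∀ i : ℕ, (Q (2 ^ (2 * j + 1) - 2)).coeff i ≡
        (1 + 2 * (1 + X) * Spoly (2 * j - 1) : Polynomial ℤ).coeff i [ZMOD 4]) ∧
      (∀ i : ℕ, (Q (2 ^ (2 * j) - 1)).coeff i ≡
        (1 + 2 * X ^ 2 + 2 * X ^ 5 + 2 * X * Sopoly (j - 2) +
          (3 + 2 * X ^ 3) * Spoly (2 * j - 2) + 2 * (1 + X) * Tpoly (2 * j - 2) +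
          X ^ (2 ^ (2 * j - 1)) : Polynomial ℤ).coeff i [ZMOD 4]) ∧
      (∀ i : ℕ, (Q (2 ^ (2 * j + 1) - 1)).coeff i ≡
        (1 + 2 * X ^ 2 + 2 * X ^ 5 + 2 * X * Sepoly (j - 1) +
          (3 + 2 * X ^ 3) * Spoly (2 * j - 1) + 2 * (1 + X) * Tpoly (2 * j - 1) +
          X ^ (2 ^ (2 * j)) : Polynomial ℤ).coeff i [ZMOD 4]) := by
  intro j hj
  obtain ⟨k, rfl⟩ : ∃ k, j = k + 2 := ⟨j - 2, by omega⟩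
  have hEven := (hasBlockForm_even_of_odd hre hro (hasBlockForm_odd hr0 hre hro k)).1
  have hOdd := (hasBlockForm_odd hr0 hre hro (k + 1)).1
  rw [show 2 * (k + 1) + 3 = 2 * k + 5 by ring, show 2 * (k + 1) + 1 = 2 * k + 3 by ring,
    show 2 * (k + 1) + 2 = 2 * k + 4 by ring] at hOdd
  obtain ⟨hQE₂, hQE₁⟩ := Q_two_pow_sub_eq_stepProd hPQ (m := 2 * k + 4) (by omega)
  obtain ⟨hQO₂, hQO₁⟩ := Q_two_pow_sub_eq_stepProd hPQ (m := 2 * k + 5) (by omega)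
  rw [show 2 * (k + 2) + 1 = 2 * k + 5 by ring, show 2 * (k + 2) = 2 * k + 4 by ring,
    show 2 * k + 4 - 2 = 2 * k + 2 by omega, show 2 * k + 4 - 1 = 2 * k + 3 by omega,
    show k + 2 - 2 = k by omega, show k + 2 - 1 = k + 1 by omega]
  refine ⟨coeff_modEq_of_mod4_eq ?_, coeff_modEq_of_mod4_eq ?_, coeff_modEq_of_mod4_eq ?_,
    coeff_modEq_of_mod4_eq ?_⟩ <;>
    simp only [hQE₂, hQE₁, hQO₂, hQO₁, ← Matrix.map_apply, ← RingHom.mapMatrix_apply, hEven, hOdd,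
      blockFormA, blockFormQ, Matrix.of_apply, Matrix.cons_val', Matrix.cons_val_zero,
      Matrix.cons_val_one, Matrix.cons_val_fin_one, map_add, map_mul, map_pow, map_one, map_ofNat,
      mod4_X] <;>
    ring

/-- (Lemma 5.3 (1)–(4).) Mod-4 description of the denominators of the convergents of the
Rudin–Shapiro Stieltjes continued fraction. -/
theorem stmt13 (r : ℕ → ℤ) (hr0 : r 0 = 1)
    (hre : ∀ n, r (2 * n) = r n) (hro : ∀ n, r (2 * n + 1) = (-1) ^ n * r n)
    (P Q : ℕ → Polynomial ℤ)
    (hP0 : P 0 = Polynomial.C (r 0) * Polynomial.X) (hQ0 : Q 0 = 1)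
    (hPQ : ∀ n : ℕ, 1 ≤ n →
      !![P (n - 1), P n; Q (n - 1), Q n] = ((List.range (n + 1)).map (step r)).prod) :
    ∀ j : ℕ, 2 ≤ j →
      (∀ i : ℕ, (Q (2 ^ (2 * j) - 2)).coeff i ≡
        (1 + 2 * X + 2 * (1 + X) * Spoly (2 * j - 2) :
          Polynomial ℤ).coeff i [ZMOD 4]) ∧
      (∀ i : ℕ, (Q (2 ^ (2 * j + 1) - 2)).coeff i ≡
        (1 + 2 * (1 + X) * Spoly (2 * j - 1) : Polynomial ℤ).coeff i [ZMOD 4]) ∧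
      (∀ i : ℕ, (Q (2 ^ (2 * j) - 1)).coeff i ≡
        (1 + 2 * X ^ 2 + 2 * X ^ 5 + 2 * X * Sopoly (j - 2) +
          (3 + 2 * X ^ 3) * Spoly (2 * j - 2) + 2 * (1 + X) * Tpoly (2 * j - 2) +
          X ^ (2 ^ (2 * j - 1)) : Polynomial ℤ).coeff i [ZMOD 4]) ∧
      (∀ i : ℕ, (Q (2 ^ (2 * j + 1) - 1)).coeff i ≡
        (1 + 2 * X ^ 2 + 2 * X ^ 5 + 2 * X * Sepoly (j - 1) +
          (3 + 2 * X ^ 3) * Spoly (2 * j - 1) + 2 * (1 + X) * Tpoly (2 * j - 1) +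
          X ^ (2 ^ (2 * j)) : Polynomial ℤ).coeff i [ZMOD 4]) :=
  stmt13_general r hr0 hre hro P Q hPQ
end
end

section
/- In ℤ[[x]], the generating function of the Catalan numbers satisfies x·φ(x) ≡ S_∞(x) + 2T_∞(x) + 2(x + x²)·S_∞(x) + 2(x² + x³ + x⁴) (mod 4); equivalently, φ(x) ≡ x^{-1}S_∞(x) + 2x^{-1}T_∞(x) + 2(1 + x)·S_∞(x) + 2(x + x² + x³) (mod 4). In particular, S_∞(x) ≡ x·φ(x) (mod 2). -/
/-
`ψ = x·φ` satisfies `ψ = x + ψ²`, while squaring `S_∞` gives `S_∞² = (S_∞ - x) + 2U`, where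
`U = Σ_{a<b} x^{2^a+2^b}` runs over the numbers with exactly two binary digits; so
`S_∞ = x + S_∞² - 2U`. On series without constant term, `f ↦ f - f²` is injective modulo any `d`,
because `(f - f²) - (g - g²) = (f - g)(1 - f - g)` and `1 - f - g` is a unit; hence
`ψ ≡ S_∞ (mod 2)`. Then `ψ² ≡ S_∞² (mod 4)`, so `ψ = x + ψ² ≡ x + S_∞² = S_∞ + 2U (mod 4)`.
Sorting the pairs `a < b` by `a = 0`, `a = 1`, `a ≥ 2` gives
`U = x(S_∞ - x) + x²(S_∞ - x - x²) + T_∞`.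
-/

open PowerSeries Classical

/-- `T_∞(x) = Σ_{i ≥ 3} Σ_{k=2}^{i-1} x^{2^i + 2^k}` (each such exponent is hit exactly
once, by uniqueness of binary expansions). -/
noncomputable def Tinf : PowerSeries ℤ :=
  PowerSeries.mk fun m =>
    if ∃ i k : ℕ, 3 ≤ i ∧ 2 ≤ k ∧ k < i ∧ m = 2 ^ i + 2 ^ k then 1 else 0

namespace Nat

theorem bitIndices_eq_singleton_iff {n k : ℕ} : n.bitIndices = [k] ↔ n = 2 ^ k := by
  constructor
  · intro h
    rw [← sum_map_two_pow_bitIndices n, h]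
    simp
  · rintro rfl
    exact bitIndices_two_pow k

theorem bitIndices_eq_pair_iff {n a b : ℕ} : n.bitIndices = [a, b] ↔ a < b ∧ n = 2 ^ a + 2 ^ b := by
  constructor
  · intro h
    have hsorted := h ▸ bitIndices_sorted (n := n)
    refine ⟨by simpa using hsorted.pairwise, ?_⟩
    rw [← sum_map_two_pow_bitIndices n, h]
    simp
  · rintro ⟨hab, rfl⟩
    simpa using bitIndices_sum_map_two_pow (L := [a, b]) (by simp [List.sortedLT_iff_pairwise, hab])

theorem bitIndices_two_pow_add_two_pow (i j : ℕ) :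
    (2 ^ i + 2 ^ j).bitIndices = if i < j then [i, j] else if j < i then [j, i] else [i + 1] := by
  rcases lt_trichotomy i j with h | rfl | h
  · simp [h, bitIndices_eq_pair_iff]
  · simp [← two_mul, ← pow_succ', bitIndices_two_pow]
  · simp [h, h.not_gt, bitIndices_eq_pair_iff, add_comm]

end Nat

theorem PowerSeries.dvd_sub_of_dvd_sub_sq_sub {R : Type*} [CommRing R] {d f g : R⟦X⟧}
    (hf : constantCoeff f = 0) (hg : constantCoeff g = 0)
    (h : d ∣ (f - f ^ 2) - (g - g ^ 2)) : d ∣ f - g := by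
  have hu : IsUnit (1 - f - g) := by
    rw [isUnit_iff_constantCoeff]
    simp [hf, hg]
  rw [show (f - f ^ 2) - (g - g ^ 2) = (f - g) * (1 - f - g) by ring] at h
  exact hu.dvd_mul_right.mp h

theorem PowerSeries.coeff_modEq_of_dvd_sub {n : ℤ} {f g : ℤ⟦X⟧} (h : (n : ℤ⟦X⟧) ∣ g - f) (i : ℕ) :
    coeff i f ≡ coeff i g [ZMOD n] := by
  obtain ⟨q, hq⟩ := h
  rw [Int.modEq_iff_dvd, ← map_sub, hq, ← map_intCast (C (R := ℤ)), coeff_C_mul]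
  exact dvd_mul_right _ _

theorem X_mul_phi_eq : X * phi = X + (X * phi) ^ 2 := by
  have h := congrArg (map (Nat.castRingHom ℤ)) catalanSeries_sq_mul_X_add_one
  have hphi : map (Nat.castRingHom ℤ) catalanSeries = phi := by
    ext n; simp [phi]
  simp only [map_add, map_mul, map_pow, map_X, map_one, hphi] at h
  linear_combination (-X) * h

open Finset

noncomputable def twoPowsFrom (a : ℕ) : ℤ⟦X⟧ := mk fun n => if ∃ k, a ≤ k ∧ n = 2 ^ k then 1 else 0

theorem coeff_twoPowsFrom (a n : ℕ) :
    coeff n (twoPowsFrom a) = if ∃ k, a ≤ k ∧ n.bitIndices = [k] then 1 else 0 := by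
  simp [twoPowsFrom, Nat.bitIndices_eq_singleton_iff]

theorem Sinf_eq_twoPowsFrom_zero : Sinf = twoPowsFrom 0 := by
  simp [Sinf, twoPowsFrom]

theorem twoPowsFrom_sub_X_pow (a : ℕ) : twoPowsFrom a - X ^ 2 ^ a = twoPowsFrom (a + 1) := by
  ext n
  simp only [twoPowsFrom, map_sub, coeff_mk, coeff_X_pow]
  by_cases h : n = 2 ^ a
  · subst h
    simp [Nat.pow_right_injective le_rfl |>.eq_iff]
  · rw [if_neg h, sub_zero]
    congr 1
    exact propext <| exists_congr fun k =>
      ⟨fun ⟨hak, hk⟩ => ⟨hak.lt_of_ne fun hka => h (hka ▸ hk), hk⟩, fun ⟨hak, hk⟩ => ⟨by omega, hk⟩⟩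

theorem twoPowsFrom_one : twoPowsFrom 1 = Sinf - X := by
  rw [← twoPowsFrom_sub_X_pow 0, ← Sinf_eq_twoPowsFrom_zero, pow_zero, pow_one]

theorem twoPowsFrom_two : twoPowsFrom 2 = Sinf - X - X ^ 2 := by
  rw [← twoPowsFrom_sub_X_pow 1, twoPowsFrom_one, pow_one]

theorem coeff_X_pow_mul_twoPowsFrom (a n : ℕ) :
    coeff n (X ^ 2 ^ a * twoPowsFrom (a + 1)) = if ∃ b, n.bitIndices = [a, b] then 1 else 0 := by
  rw [coeff_X_pow_mul', twoPowsFrom, coeff_mk]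
  simp only [Nat.bitIndices_eq_pair_iff]
  by_cases h : 2 ^ a ≤ n
  · rw [if_pos h]
    congr 1
    exact propext <| exists_congr fun b =>
      ⟨fun ⟨hb, _⟩ => ⟨hb, by omega⟩, fun ⟨hb, _⟩ => ⟨hb, by omega⟩⟩
  · rw [if_neg h, if_neg]
    rintro ⟨b, -, rfl⟩
    exact h (Nat.le_add_right _ _)

noncomputable def Uinf : ℤ⟦X⟧ := mk fun n => if ∃ a b, n.bitIndices = [a, b] then 1 else 0

theorem coeff_Tinf (n : ℕ) :
    coeff n Tinf = if ∃ a b, 2 ≤ a ∧ n.bitIndices = [a, b] then 1 else 0 := by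
  simp only [Tinf, coeff_mk, Nat.bitIndices_eq_pair_iff]
  congr 1
  apply propext
  constructor
  · rintro ⟨i, k, -, hk, hki, rfl⟩
    exact ⟨k, i, hk, hki, add_comm _ _⟩
  · rintro ⟨k, i, hk, hki, rfl⟩
    exact ⟨i, k, by omega, hk, hki, add_comm _ _⟩

theorem Uinf_eq : Uinf = Tinf + X * twoPowsFrom 1 + X ^ 2 * twoPowsFrom 2 := by
  ext n
  have h0 := coeff_X_pow_mul_twoPowsFrom 0 n
  have h1 := coeff_X_pow_mul_twoPowsFrom 1 n
  simp only [pow_zero, pow_one, zero_add] at h0 h1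
  rw [map_add, map_add, h0, h1, coeff_Tinf, Uinf, coeff_mk]
  rcases n.bitIndices with _ | ⟨a, _ | ⟨b, _ | ⟨c, L⟩⟩⟩
  · simp
  · simp
  · rcases a with _ | _ | a <;> simp
  · simp

noncomputable def twoPowPairs (n : ℕ) : Finset (ℕ × ℕ) :=
  {p ∈ antidiagonal n | (∃ i, p.1 = 2 ^ i) ∧ ∃ j, p.2 = 2 ^ j}

theorem mem_twoPowPairs {n : ℕ} {p : ℕ × ℕ} :
    p ∈ twoPowPairs n ↔ ∃ i j, p = (2 ^ i, 2 ^ j) ∧ 2 ^ i + 2 ^ j = n := by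
  constructor
  · intro hp
    obtain ⟨hxy, ⟨i, hi⟩, ⟨j, hj⟩⟩ := by
      simpa [twoPowPairs, HasAntidiagonal.mem_antidiagonal] using hp
    exact ⟨i, j, Prod.ext hi hj, hi ▸ hj ▸ hxy⟩
  · rintro ⟨i, j, rfl, rfl⟩
    simp [twoPowPairs]

theorem twoPowPairs_eq_empty {n : ℕ} (h : ∀ i j, (2 ^ i + 2 ^ j).bitIndices ≠ n.bitIndices) :
    twoPowPairs n = ∅ := by
  refine eq_empty_of_forall_notMem fun p hp => ?_
  obtain ⟨i, j, -, rfl⟩ := mem_twoPowPairs.mp hp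
  exact h i j rfl

theorem twoPowPairs_of_bitIndices_eq_singleton {n k : ℕ} (h : n.bitIndices = [k + 1]) :
    twoPowPairs n = {(2 ^ k, 2 ^ k)} := by
  ext p
  rw [mem_twoPowPairs, mem_singleton]
  constructor
  · rintro ⟨i, j, rfl, rfl⟩
    rw [Nat.bitIndices_two_pow_add_two_pow] at h
    split_ifs at h
    · simp at h
    · simp at h
    · obtain ⟨rfl, rfl⟩ : i = k ∧ i = j := ⟨by simpa using h, by omega⟩
      rfl
  · rintro rfl
    exact ⟨k, k, rfl, by rw [← two_mul, ← pow_succ', Nat.bitIndices_eq_singleton_iff.mp h]⟩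

theorem twoPowPairs_of_bitIndices_eq_pair {n a b : ℕ} (h : n.bitIndices = [a, b]) :
    twoPowPairs n = {(2 ^ a, 2 ^ b), (2 ^ b, 2 ^ a)} := by
  have hn := (Nat.bitIndices_eq_pair_iff.mp h).2
  ext p
  rw [mem_twoPowPairs, mem_insert, mem_singleton]
  constructor
  · rintro ⟨i, j, rfl, rfl⟩
    rw [Nat.bitIndices_two_pow_add_two_pow] at h
    split_ifs at h
    · obtain ⟨rfl, rfl⟩ : i = a ∧ j = b := by simpa using h
      exact .inl rfl
    · obtain ⟨rfl, rfl⟩ : j = a ∧ i = b := by simpa using h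
      exact .inr rfl
    · simp at h
  · rintro (rfl | rfl)
    · exact ⟨a, b, rfl, hn.symm⟩
    · exact ⟨b, a, rfl, by rw [hn, add_comm]⟩

theorem coeff_Sinf_sq (n : ℕ) : coeff n (Sinf ^ 2) = (#(twoPowPairs n) : ℤ) := by
  rw [sq, coeff_mul, twoPowPairs, Finset.card_filter, Nat.cast_sum]
  refine Finset.sum_congr rfl fun p _ => ?_
  simp only [Sinf, coeff_mk, ite_and]
  split_ifs <;> simp

theorem Sinf_sq : Sinf ^ 2 = Sinf - X + 2 * Uinf := by
  ext n
  rw [coeff_Sinf_sq, ← twoPowsFrom_one, map_add, coeff_twoPowsFrom, ← map_ofNat C 2, coeff_C_mul,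
    Uinf, coeff_mk]
  by_cases h1 : ∃ k, n.bitIndices = [k + 1]
  · obtain ⟨k, h⟩ := h1
    simp [twoPowPairs_of_bitIndices_eq_singleton h, h]
  by_cases h2 : ∃ a b, n.bitIndices = [a, b]
  · obtain ⟨a, b, h⟩ := h2
    have hab := (Nat.bitIndices_eq_pair_iff.mp h).1
    rw [twoPowPairs_of_bitIndices_eq_pair h,
      card_pair (by simp [hab.ne, Nat.pow_right_injective le_rfl |>.eq_iff])]
    simp [h]
  rw [twoPowPairs_eq_empty, if_neg, if_neg h2]
  · simp
  · rintro ⟨_ | k, hk, h⟩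
    exacts [absurd hk (by simp), h1 ⟨k, h⟩]
  · intro i j hij
    rw [Nat.bitIndices_two_pow_add_two_pow] at hij
    split_ifs at hij
    exacts [h2 ⟨i, j, hij.symm⟩, h2 ⟨j, i, hij.symm⟩, h1 ⟨i, hij.symm⟩]

theorem two_dvd_X_mul_phi_sub_Sinf : (2 : ℤ⟦X⟧) ∣ X * phi - Sinf := by
  refine dvd_sub_of_dvd_sub_sq_sub (by simp) ?_ ⟨Uinf, ?_⟩
  · simp [Sinf, ← coeff_zero_eq_constantCoeff_apply, eq_comm (a := 0)]
  · linear_combination X_mul_phi_eq + Sinf_sq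

theorem four_dvd_X_mul_phi_sub : (4 : ℤ⟦X⟧) ∣ X * phi - (Sinf + 2 * Uinf) := by
  rw [show X * phi - (Sinf + 2 * Uinf) = (X * phi) ^ 2 - Sinf ^ 2 by
    linear_combination X_mul_phi_eq + Sinf_sq]
  convert dvd_sub_pow_of_dvd_sub (p := 2) (by exact_mod_cast two_dvd_X_mul_phi_sub_Sinf) 1
    using 1 <;> norm_num

/-- (Equation (4.6).) In `ℤ[[x]]`,
`x·φ(x) ≡ S_∞(x) + 2T_∞(x) + 2(x + x²)·S_∞(x) + 2(x² + x³ + x⁴) (mod 4)`;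
in particular `S_∞(x) ≡ x·φ(x) (mod 2)`. -/
theorem stmt17 :
    (∀ i : ℕ, PowerSeries.coeff i (PowerSeries.X * phi) ≡
      PowerSeries.coeff i
        (Sinf + 2 * Tinf + 2 * (PowerSeries.X + PowerSeries.X ^ 2) * Sinf +
          2 * (PowerSeries.X ^ 2 + PowerSeries.X ^ 3 + PowerSeries.X ^ 4)) [ZMOD 4]) ∧
    (∀ i : ℕ, PowerSeries.coeff i Sinf ≡
      PowerSeries.coeff i (PowerSeries.X * phi) [ZMOD 2]) := by
  have hR : Sinf + 2 * Tinf + 2 * (X + X ^ 2) * Sinf + 2 * (X ^ 2 + X ^ 3 + X ^ 4) - X * phi =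
      4 * (X ^ 2 + X ^ 3 + X ^ 4) - (X * phi - (Sinf + 2 * Uinf)) := by
    rw [Uinf_eq, twoPowsFrom_one, twoPowsFrom_two]
    ring
  refine ⟨fun i => coeff_modEq_of_dvd_sub ?_ i, fun i => coeff_modEq_of_dvd_sub ?_ i⟩
  · rw [hR]
    exact_mod_cast dvd_sub (dvd_mul_right _ _) four_dvd_X_mul_phi_sub
  · exact_mod_cast two_dvd_X_mul_phi_sub_Sinf
end
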